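/- arXiv:2007.01996 — 2 statements merged into one kernel-verified Lean document; each statement's English description precedes it below -/
import Mathlib

section
/- For all real numbers μ₁, μ₂ with 0 < μ₁ < μ₂ < 1, one has maxS(μ₁, βopt(μ₂)) < 1 − √(1−μ₂); that is, evaluating the first quantity at the coefficient that is optimal for μ₂ gives a value strictly smaller than the optimal value min_{β∈ℝ} maxS(μ₂,β) = 1 − √(1−μ₂) for μ₂. -/
/-- The maximum of the moduli of the two complex roots (counted with multiplicity) of
`λ² − (1+β)·μ·λ + β·μ = 0`; the roots are given by the quadratic formula
`((1+β)μ ± √((1+β)²μ² − 4βμ))/2` (complex square root via `cpow`). -/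
noncomputable def maxS (μ β : ℝ) : ℝ :=
  max (‖(((((1 + β) * μ : ℝ) : ℂ) +
        ((((1 + β) ^ 2 * μ ^ 2 - 4 * β * μ : ℝ) : ℂ)) ^ ((1 : ℂ) / 2)) / 2)‖)
      (‖(((((1 + β) * μ : ℝ) : ℂ) -
        ((((1 + β) ^ 2 * μ ^ 2 - 4 * β * μ : ℝ) : ℂ)) ^ ((1 : ℂ) / 2)) / 2)‖)

/-- The optimal coefficient `βopt(μ) = (1 − √(1−μ))/(1 + √(1−μ))`. -/
noncomputable def βopt (μ : ℝ) : ℝ := (1 - Real.sqrt (1 - μ)) / (1 + Real.sqrt (1 - μ))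

/-! At `β = βopt μ₂` the discriminant `(1+β)²μ² − 4βμ` vanishes for `μ = μ₂` and is negative
for `0 < μ < μ₂`. The two roots for `μ₁` are then complex conjugates of modulus `√(βμ₁)`, which
is smaller than `√(βμ₂) = 1 − √(1−μ₂)`. -/

open Complex Real

lemma ofReal_cpow_one_div_two_of_nonpos {x : ℝ} (hx : x ≤ 0) :
    (x : ℂ) ^ ((1 : ℂ) / 2) = (√(-x) : ℂ) * I := by
  have hsqrt : ((-x : ℝ) : ℂ) ^ ((1 : ℂ) / 2) = (√(-x) : ℂ) := by
    rw [sqrt_eq_rpow, ofReal_cpow (neg_nonneg.2 hx)]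
    norm_num
  rw [ofReal_cpow_of_nonpos hx, ← ofReal_neg, hsqrt,
    show (π : ℂ) * I * (1 / 2) = π / 2 * I by ring, exp_pi_div_two_mul_I]

lemma norm_add_mul_I_div_two_of_sq_eq {p q t : ℝ} (h : t ^ 2 = 4 * q - p ^ 2) :
    ‖((p : ℂ) + t * I) / 2‖ = √q := by
  rw [norm_div, norm_add_mul_I, h, add_sub_cancel, Complex.norm_two,
    show (4 : ℝ) * q = 2 ^ 2 * q by norm_num, sqrt_mul (by norm_num), sqrt_sq zero_le_two]
  ring

lemma norm_quadratic_root_of_discrim_nonpos {p q : ℝ} (h : p ^ 2 - 4 * q ≤ 0) :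
    ‖((p : ℂ) + ((p ^ 2 - 4 * q : ℝ) : ℂ) ^ ((1 : ℂ) / 2)) / 2‖ = √q ∧
      ‖((p : ℂ) - ((p ^ 2 - 4 * q : ℝ) : ℂ) ^ ((1 : ℂ) / 2)) / 2‖ = √q := by
  have hsq : √(-(p ^ 2 - 4 * q)) ^ 2 = 4 * q - p ^ 2 := by
    rw [sq_sqrt (by linarith)]; ring
  have hconj : (p : ℂ) - √(-(p ^ 2 - 4 * q)) * I = p + ((-√(-(p ^ 2 - 4 * q)) : ℝ) : ℂ) * I := by
    push_cast; ring
  rw [ofReal_cpow_one_div_two_of_nonpos h, hconj]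
  exact ⟨norm_add_mul_I_div_two_of_sq_eq hsq, norm_add_mul_I_div_two_of_sq_eq (by rwa [neg_sq])⟩

lemma maxS_eq_sqrt_of_discrim_nonpos {μ β : ℝ} (h : (1 + β) ^ 2 * μ ^ 2 - 4 * β * μ ≤ 0) :
    maxS μ β = √(β * μ) := by
  have hdisc : (1 + β) ^ 2 * μ ^ 2 - 4 * β * μ = ((1 + β) * μ) ^ 2 - 4 * (β * μ) := by ring
  rw [hdisc] at h
  obtain ⟨hplus, hminus⟩ := norm_quadratic_root_of_discrim_nonpos h
  rw [maxS, hdisc, hplus, hminus, max_self]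

section βopt

variable {μ : ℝ}

lemma βopt_pos (h0 : 0 < μ) : 0 < βopt μ := by
  have hs : √(1 - μ) < 1 := by
    rw [sqrt_lt' one_pos]; linarith
  exact div_pos (by linarith) (by positivity)

lemma βopt_mul_self (h1 : μ ≤ 1) : βopt μ * μ = (1 - √(1 - μ)) ^ 2 := by
  have hs : √(1 - μ) ^ 2 = 1 - μ := sq_sqrt (by linarith)
  rw [βopt]
  field_simp
  linear_combination (1 - √(1 - μ)) * hs

lemma one_add_βopt_sq_mul_self (h1 : μ ≤ 1) : (1 + βopt μ) ^ 2 * μ = 4 * βopt μ := by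
  have hs : √(1 - μ) ^ 2 = 1 - μ := sq_sqrt (by linarith)
  rw [βopt]
  field_simp
  linear_combination 4 * hs

end βopt

theorem stmt1 (μ₁ μ₂ : ℝ) (h0 : 0 < μ₁) (h12 : μ₁ < μ₂) (h2 : μ₂ < 1) :
    maxS μ₁ (βopt μ₂) < 1 - Real.sqrt (1 - μ₂) := by
  have hβ : 0 < βopt μ₂ := βopt_pos (h0.trans h12)
  have hcrit : (1 + βopt μ₂) ^ 2 * μ₁ < 4 * βopt μ₂ :=
    one_add_βopt_sq_mul_self h2.le ▸ by gcongr
  have hdisc : (1 + βopt μ₂) ^ 2 * μ₁ ^ 2 - 4 * βopt μ₂ * μ₁ < 0 := by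
    linarith [mul_lt_mul_of_pos_left hcrit h0]
  have hs : √(1 - μ₂) ≤ 1 := by
    rw [sqrt_le_one]; linarith
  rw [maxS_eq_sqrt_of_discrim_nonpos hdisc.le, ← sqrt_sq (sub_nonneg.2 hs), ← βopt_mul_self h2.le]
  exact sqrt_lt_sqrt (by positivity) (by gcongr)
end

section
/- Let μ be a real number with 0 < μ < 1 and let β₁(μ) = (1−√(1−μ))/(1+√(1−μ)). Then the function β ↦ maxS(μ,β) is monotonically decreasing on the interval (−∞, β₁(μ)] and monotonically increasing on the interval [β₁(μ), +∞). -/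
/-- `β₁(μ) = (1 − √(1−μ))/(1 + √(1−μ))` (equals `βopt μ`). -/
noncomputable def β₁ (μ : ℝ) : ℝ := (1 - Real.sqrt (1 - μ)) / (1 + Real.sqrt (1 - μ))
/-! With `u = 2 − μ(1+β)` and `k = 2√(1−μ)` the discriminant of the quadratic is `u² − k²`, and
`u ≥ k` exactly when `β ≤ β₁ μ`. There the roots are real and `maxS = (|(1+β)μ| + √(u² − k²))/2`:
increasing β by δ raises `|(1+β)μ|` by at most `μδ`, the amount by which u drops, while
`u − √(u² − k²)` is antitone in u, so `√(u² − k²)` drops by at least `μδ`. For `β ≥ β₁ μ` both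
`√(βμ)` and `((1+β)μ + √(u² − k²))/2` increase with β, and `maxS` is their maximum. -/

open Complex Set

lemma ofReal_cpow_half_of_nonneg {x : ℝ} (hx : 0 ≤ x) : (x : ℂ) ^ ((1 : ℂ) / 2) = √x := by
  rw [Real.sqrt_eq_rpow, ofReal_cpow hx]; norm_num

lemma ofReal_cpow_half_of_neg {x : ℝ} (hx : x < 0) : (x : ℂ) ^ ((1 : ℂ) / 2) = √(-x) * I := by
  rw [ofReal_cpow_of_nonpos hx.le, ← ofReal_neg, ofReal_cpow_half_of_nonneg (by linarith),
    show (Real.pi : ℂ) * I * (1 / 2) = Real.pi / 2 * I by ring, exp_pi_div_two_mul_I]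

lemma max_abs_add_div_two_abs_sub_div_two {p r : ℝ} (hr : 0 ≤ r) :
    max |(p + r) / 2| |(p - r) / 2| = (|p| + r) / 2 := by
  apply le_antisymm
  · apply max_le <;> rw [abs_le] <;> constructor <;> linarith [le_abs_self p, neg_abs_le p]
  · rcases le_total 0 p with hp | hp
    · exact le_max_of_le_left (by rw [abs_of_nonneg hp, le_abs]; left; linarith)
    · exact le_max_of_le_right (by rw [abs_of_nonpos hp, le_abs]; right; linarith)

lemma maxS_eq_of_discrim_nonneg {μ β : ℝ} (hD : 0 ≤ (1 + β) ^ 2 * μ ^ 2 - 4 * β * μ) :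
    maxS μ β = (|(1 + β) * μ| + √((1 + β) ^ 2 * μ ^ 2 - 4 * β * μ)) / 2 := by
  rw [maxS, ofReal_cpow_half_of_nonneg hD,
    ← max_abs_add_div_two_abs_sub_div_two (Real.sqrt_nonneg _)]
  norm_cast

lemma maxS_eq_of_discrim_neg {μ β : ℝ} (hD : (1 + β) ^ 2 * μ ^ 2 - 4 * β * μ < 0) :
    maxS μ β = √(β * μ) := by
  set r := √(-((1 + β) ^ 2 * μ ^ 2 - 4 * β * μ))
  have hr : r ^ 2 = -((1 + β) ^ 2 * μ ^ 2 - 4 * β * μ) := Real.sq_sqrt (by linarith)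
  have hnorm : ∀ y : ℝ, y ^ 2 = r ^ 2 →
      ‖((((1 + β) * μ : ℝ) : ℂ) + y * I) / 2‖ = √(β * μ) := by
    intro y hy
    rw [show ((((1 + β) * μ : ℝ) : ℂ) + y * I) / 2 = (((1 + β) * μ / 2 : ℝ) : ℂ) + (y / 2 : ℝ) * I
      by push_cast; ring, norm_add_mul_I, div_pow, div_pow, hy, hr]
    congr 1
    ring
  rw [maxS, ofReal_cpow_half_of_neg hD, hnorm r rfl, sub_eq_add_neg, ← neg_mul, ← ofReal_neg,
    hnorm (-r) (neg_sq r), max_self]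

-- `Real.sqrt` vanishes on negative numbers, so this covers real and complex roots alike.
lemma maxS_eq_max_sqrt {μ β : ℝ} (hp : 0 ≤ (1 + β) * μ) :
    maxS μ β = max √(β * μ) (((1 + β) * μ + √((1 + β) ^ 2 * μ ^ 2 - 4 * β * μ)) / 2) := by
  rcases le_or_gt 0 ((1 + β) ^ 2 * μ ^ 2 - 4 * β * μ) with hD | hD
  · have hr := Real.sq_sqrt hD
    have hr0 := Real.sqrt_nonneg ((1 + β) ^ 2 * μ ^ 2 - 4 * β * μ)
    rw [maxS_eq_of_discrim_nonneg hD, abs_of_nonneg hp, max_eq_right]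
    rw [Real.sqrt_le_iff]
    constructor
    · positivity
    · nlinarith
  · rw [maxS_eq_of_discrim_neg hD, Real.sqrt_eq_zero'.mpr hD.le, max_eq_left]
    rw [Real.le_sqrt (by positivity) (by nlinarith)]
    nlinarith

lemma sub_sqrt_sq_sub_sq_antitoneOn {k : ℝ} (hk : 0 ≤ k) :
    AntitoneOn (fun u => u - √(u ^ 2 - k ^ 2)) (Ici k) := by
  intro u hu v hv huv
  simp only [mem_Ici] at hu hv ⊢
  have hx := Real.sq_sqrt (by nlinarith : 0 ≤ u ^ 2 - k ^ 2)
  have hy := Real.sq_sqrt (by nlinarith : 0 ≤ v ^ 2 - k ^ 2)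
  have hxy : √(u ^ 2 - k ^ 2) ≤ √(v ^ 2 - k ^ 2) := Real.sqrt_le_sqrt (by nlinarith)
  have hyv : √(v ^ 2 - k ^ 2) ≤ v := Real.sqrt_le_iff.mpr ⟨by linarith, by nlinarith⟩
  -- `(u - x)(u + x) = k² = (v - y)(v + y)` with `u + x ≤ v + y`, where `x, y` are the roots.
  nlinarith [Real.sqrt_nonneg (u ^ 2 - k ^ 2)]

lemma sqrt_sq_sub_sq_antitoneOn (k : ℝ) :
    AntitoneOn (fun u => √(u ^ 2 - k ^ 2)) (Iic k) := by
  intro u hu v hv huv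
  simp only [mem_Iic] at hu hv ⊢
  rcases le_or_gt v 0 with hv0 | hv0
  · exact Real.sqrt_le_sqrt (by nlinarith)
  · rw [Real.sqrt_eq_zero'.mpr (by nlinarith)]
    exact Real.sqrt_nonneg _

lemma discrim_eq_sq_sub_sq {μ : ℝ} (β : ℝ) (hμ : μ ≤ 1) :
    (1 + β) ^ 2 * μ ^ 2 - 4 * β * μ = (2 - μ * (1 + β)) ^ 2 - (2 * √(1 - μ)) ^ 2 := by
  rw [mul_pow, Real.sq_sqrt (by linarith)]
  ring

lemma mul_one_add_β₁ {μ : ℝ} (hμ : μ ≤ 1) : μ * (1 + β₁ μ) = 2 * (1 - √(1 - μ)) := by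
  have hs := Real.sq_sqrt (by linarith : 0 ≤ 1 - μ)
  have hs0 := Real.sqrt_nonneg (1 - μ)
  rw [β₁]
  field_simp
  nlinarith

lemma maxS_antitoneOn {μ : ℝ} (h0 : 0 ≤ μ) (h1 : μ ≤ 1) : AntitoneOn (maxS μ) (Iic (β₁ μ)) := by
  have hk : 0 ≤ 2 * √(1 - μ) := by positivity
  have hu : ∀ β ∈ Iic (β₁ μ), 2 * √(1 - μ) ≤ 2 - μ * (1 + β) := fun β hβ => by
    nlinarith [mul_one_add_β₁ h1, mem_Iic.mp hβ]
  have hD : ∀ β ∈ Iic (β₁ μ), 0 ≤ (1 + β) ^ 2 * μ ^ 2 - 4 * β * μ := fun β hβ => by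
    rw [discrim_eq_sq_sub_sq β h1]; nlinarith [hu β hβ]
  intro a ha b hb hab
  have hsqrt := sub_sqrt_sq_sub_sq_antitoneOn hk (hu b hb) (hu a ha) (by nlinarith)
  have habs : |(1 + b) * μ| - |(1 + a) * μ| ≤ μ * (b - a) := by
    calc |(1 + b) * μ| - |(1 + a) * μ| ≤ |(1 + b) * μ - (1 + a) * μ| := abs_sub_abs_le_abs_sub _ _
      _ = μ * (b - a) := by rw [← abs_of_nonneg (by nlinarith : 0 ≤ μ * (b - a))]; ring_nf
  simp only at hsqrt
  rw [maxS_eq_of_discrim_nonneg (hD b hb), maxS_eq_of_discrim_nonneg (hD a ha),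
    discrim_eq_sq_sub_sq a h1, discrim_eq_sq_sub_sq b h1]
  linarith

lemma maxS_monotoneOn {μ : ℝ} (h0 : 0 ≤ μ) (h1 : μ ≤ 1) : MonotoneOn (maxS μ) (Ici (β₁ μ)) := by
  have hu : ∀ β ∈ Ici (β₁ μ), 2 - μ * (1 + β) ≤ 2 * √(1 - μ) := fun β hβ => by
    nlinarith [mul_one_add_β₁ h1, mem_Ici.mp hβ]
  have hp : ∀ β ∈ Ici (β₁ μ), 0 ≤ (1 + β) * μ := fun β hβ => by
    nlinarith [hu β hβ, Real.sqrt_le_one.mpr (by linarith : 1 - μ ≤ 1)]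
  intro a ha b hb hab
  have hsqrt := sqrt_sq_sub_sq_antitoneOn _ (hu b hb) (hu a ha) (by nlinarith)
  simp only at hsqrt
  rw [maxS_eq_max_sqrt (hp a ha), maxS_eq_max_sqrt (hp b hb), discrim_eq_sq_sub_sq a h1,
    discrim_eq_sq_sub_sq b h1]
  exact max_le_max (Real.sqrt_le_sqrt (by nlinarith)) (by nlinarith)

theorem stmt6 (μ : ℝ) (h0 : 0 < μ) (h1 : μ < 1) :
    AntitoneOn (fun β => maxS μ β) (Set.Iic (β₁ μ)) ∧
    MonotoneOn (fun β => maxS μ β) (Set.Ici (β₁ μ)) :=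
  ⟨maxS_antitoneOn h0.le h1.le, maxS_monotoneOn h0.le h1.le⟩
end
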